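/- There exist constants C', c' > 0 depending only on α such that for all j ≥ C': log(φ_{j−1}(t)/φ_j(t)) ≤ −c' 2^j j^{−β} for all t ≥ a_j, and log(φ_{j+1}(t)/φ_j(t)) ≤ −c' 2^j j^{−β} for all t ≤ b_j. -/

import Mathlib

open MeasureTheory ProbabilityTheory Filter
open scoped Classical

noncomputable section

/-- `mseq α j = 2⌊j^(1/α)⌋`, the sequence `m_j` from the construction. -/
def mseq (α : ℝ) (j : ℕ) : ℕ := 2 * ⌊(j : ℝ) ^ (1 / α)⌋₊

/-- The index `j` of the block `I_j = (m_(j-1), m_j]` containing `k`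
(with the convention `m_(-1) = -1`). -/
def blockIdx (α : ℝ) (k : ℕ) : ℕ := sInf {j : ℕ | k ≤ mseq α j}

/-- The deterministic coefficient sequence: `c_k = exp (-2^j)` for `k ∈ I_j`. -/
def cseq (α : ℝ) (k : ℕ) : ℝ := Real.exp (-(2 : ℝ) ^ blockIdx α k)

/-- `j_* = max {j : I_j ∩ {0,…,n} ≠ ∅}`, the index of the block containing `n`. -/
def jStar (α : ℝ) (n : ℕ) : ℕ := blockIdx α n

/-- `β = min {1/2, (1-α)/(2α)}`. -/
def betaC (α : ℝ) : ℝ := min (1 / 2) ((1 - α) / (2 * α))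

/-- `a_j = α j^(1-1/α) 2^(j-2) (1 + j^(-β))`. -/
def aseq (α : ℝ) (j : ℕ) : ℝ :=
  α * (j : ℝ) ^ (1 - 1 / α) * (2 : ℝ) ^ ((j : ℤ) - 2) * (1 + (j : ℝ) ^ (-betaC α))

/-- `b_j = α j^(1-1/α) 2^(j-1) (1 - j^(-β))`. -/
def bseq (α : ℝ) (j : ℕ) : ℝ :=
  α * (j : ℝ) ^ (1 - 1 / α) * (2 : ℝ) ^ ((j : ℤ) - 1) * (1 - (j : ℝ) ^ (-betaC α))

/-- `φ_j(t) = c_(m_j) e^(t m_j)` with `c_(m_j) = exp (-2^j)`. -/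
def phi (α : ℝ) (j : ℕ) (t : ℝ) : ℝ := Real.exp (-(2 : ℝ) ^ j) * Real.exp (t * mseq α j)

/-- `g_n(t) = f_n(e^t) = ∑_{k=0}^n c_k ε_k e^{tk}`. -/
def gval (α : ℝ) {Ω : Type*} (ε : ℕ → Ω → ℝ) (n : ℕ) (ω : Ω) (t : ℝ) : ℝ :=
  ∑ k ∈ Finset.range (n + 1), cseq α k * ε k ω * Real.exp (t * k)

/-- `R_n`: the number of real roots of `f_n(z) = ∑_{k=0}^n c_k ε_k z^k`
(counted without multiplicity). -/
def Rroots (α : ℝ) {Ω : Type*} (ε : ℕ → Ω → ℝ) (n : ℕ) (ω : Ω) : ℕ :=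
  Set.ncard {t : ℝ | ∑ k ∈ Finset.range (n + 1), cseq α k * ε k ω * t ^ k = 0}

/-- `S_n`: the number of sign changes among `(ε_(m_0), …, ε_(m_(j_*-1)), ε_n)`. -/
def Schanges (α : ℝ) {Ω : Type*} (ε : ℕ → Ω → ℝ) (n : ℕ) (ω : Ω) : ℕ :=
  ((Finset.range (jStar α n)).filter fun j =>
    ε (mseq α j) ω * (if j + 1 < jStar α n then ε (mseq α (j + 1)) ω else ε n ω) < 0).card

/-!
With `p = 1/α`, `log (φᵢ(t)/φⱼ(t)) = 2^j - 2^i + t (mᵢ - mⱼ)`, so both bounds come down to the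
gaps `mⱼ - mⱼ₋₁` and `mⱼ₊₁ - mⱼ`. Up to the floor error `±2` these are `2 (x^p - (x-1)^p)` and
`2 ((x+1)^p - x^p)` at `x = j`, which the tangent lines of the convex `x ↦ x^p` and Bernoulli's
inequality pin down as `2p j^(p-1) (1 + O(1/j))`. Multiplied by `aⱼ`, resp. `bⱼ`, they give
`2^(j-1) (1+u) (1 - O(u²))`, resp. `2^j (1-u) (1 + O(u²))` with `u = j^(-β)`: the relative errors
are `O(1/j)` and, from the floor, `O(j^(1-p))`, and `2β ≤ 1`, `2β ≤ p - 1` make both at most `u²`.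
Once `u` is small the linear term `±u` wins, and both logarithms are at most `-2^j u / 4`.
-/

open Real

section Elementary

variable {p q x y : ℝ}

lemma rpow_add_mul_rpow_sub_one_le (hx : 0 < x) (hy : -x ≤ y) (hp : 1 ≤ p) :
    x ^ p + p * x ^ (p - 1) * y ≤ (x + y) ^ p := by
  have hyx : -1 ≤ y / x := by rwa [le_div_iff₀ hx, neg_one_mul]
  have hsplit : (x + y) ^ p = x ^ p * (1 + y / x) ^ p := by
    rw [← mul_rpow hx.le (by linarith), mul_add, mul_one, mul_div_cancel₀ _ hx.ne']
  calc x ^ p + p * x ^ (p - 1) * y = x ^ p * (1 + p * (y / x)) := by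
        rw [rpow_sub_one hx.ne']; field_simp
    _ ≤ (x + y) ^ p := by
        rw [hsplit]
        exact mul_le_mul_of_nonneg_left (one_add_mul_self_le_rpow_one_add hyx hp)
          (rpow_nonneg hx.le _)

lemma one_sub_mul_le_one_sub_rpow (hq : 0 ≤ q) (hy0 : 0 ≤ y) (hy1 : y ≤ 1) :
    1 - (q + 1) * y ≤ (1 - y) ^ q :=
  calc 1 - (q + 1) * y = 1 + (q + 1) * (-y) := by ring
    _ ≤ (1 + -y) ^ (q + 1) := one_add_mul_self_le_rpow_one_add (by linarith) (by linarith)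
    _ ≤ (1 - y) ^ q := by
        rw [← sub_eq_add_neg]
        exact rpow_le_rpow_of_exponent_ge' (by linarith) (by linarith) hq (by linarith)

lemma one_add_rpow_le_one_add_two_mul (hq : 0 ≤ q) (hy : 0 ≤ y) (hqy : q * y ≤ 1) :
    (1 + y) ^ q ≤ 1 + 2 * (q * y) := by
  have hqy0 : 0 ≤ q * y := mul_nonneg hq hy
  have hexp : (1 + y) ^ q ≤ exp (q * y) := by
    rw [mul_comm, exp_mul]
    exact rpow_le_rpow (by linarith) (by linarith [add_one_le_exp y]) hq
  have h := abs_exp_sub_one_le (x := q * y) (by rwa [abs_of_nonneg hqy0])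
  rw [abs_of_nonneg hqy0] at h
  linarith [(abs_le.1 h).2]

lemma rpow_one_sub_mul_rpow_sub_one (hx : 0 < x) (hy : 0 ≤ y) :
    x ^ (1 - p) * y ^ (p - 1) = (y / x) ^ (p - 1) := by
  rw [div_rpow hy hx.le, div_eq_inv_mul, ← rpow_neg hx.le, neg_sub]

end Elementary

lemma mseq_mono {α : ℝ} (hα : 0 ≤ α) : Monotone (mseq α) := fun _ _ hij =>
  Nat.mul_le_mul_left 2 <| Nat.floor_le_floor <|
    rpow_le_rpow (Nat.cast_nonneg _) (Nat.cast_le.2 hij) (by positivity)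

lemma abs_mseq_succ_sub_mseq_sub_le (α : ℝ) (j : ℕ) :
    |((mseq α (j + 1) : ℝ) - mseq α j) - 2 * (((j : ℝ) + 1) ^ (1 / α) - (j : ℝ) ^ (1 / α))|
      ≤ 2 := by
  simp only [mseq]
  push_cast
  have h₁ := Nat.floor_le (rpow_nonneg (by positivity : (0 : ℝ) ≤ j + 1) (1 / α))
  have h₂ := Nat.sub_one_lt_floor (((j : ℝ) + 1) ^ (1 / α))
  have h₃ := Nat.floor_le (rpow_nonneg (Nat.cast_nonneg j) (1 / α))
  have h₄ := Nat.sub_one_lt_floor ((j : ℝ) ^ (1 / α))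
  rw [abs_le]
  constructor <;> linarith

lemma log_phi_div_phi (α : ℝ) (i j : ℕ) (t : ℝ) :
    log (phi α i t / phi α j t) = 2 ^ j - 2 ^ i + t * ((mseq α i : ℝ) - mseq α j) := by
  rw [phi, phi, ← exp_add, ← exp_add, ← exp_sub, log_exp]
  ring

section Beta

variable {α : ℝ}

lemma betaC_pos (hα : α ∈ Set.Ioo (0 : ℝ) 1) : 0 < betaC α :=
  lt_min (by norm_num) (div_pos (by linarith [hα.2]) (by linarith [hα.1]))

lemma two_mul_betaC_le_one : 2 * betaC α ≤ 1 := by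
  linarith [show betaC α ≤ 1 / 2 from min_le_left _ _]

lemma two_mul_betaC_le (hα : 0 < α) : 2 * betaC α ≤ 1 / α - 1 :=
  calc 2 * betaC α ≤ 2 * ((1 - α) / (2 * α)) := by gcongr; exact min_le_right _ _
    _ = 1 / α - 1 := by field_simp

lemma rpow_le_rpow_neg_betaC_sq {x e : ℝ} (hx : 1 ≤ x) (he : e ≤ -(2 * betaC α)) :
    x ^ e ≤ (x ^ (-betaC α)) ^ 2 := by
  rw [← rpow_natCast, ← rpow_mul (by linarith)]
  exact rpow_le_rpow_of_exponent_le hx (by push_cast; linarith)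

lemma mul_inv_add_rpow_le_mul_rpow_neg_betaC_sq {c x : ℝ} (hα : 0 < α) (hc : 0 ≤ c)
    (hx : 1 ≤ x) :
    c * x⁻¹ + x ^ (1 - 1 / α) ≤ (c + 1) * (x ^ (-betaC α)) ^ 2 := by
  have hinv : x⁻¹ ≤ (x ^ (-betaC α)) ^ 2 := by
    simpa [rpow_neg_one] using
      rpow_le_rpow_neg_betaC_sq (α := α) (e := -1) hx
        (by linarith [two_mul_betaC_le_one (α := α)])
  have hpow : x ^ (1 - 1 / α) ≤ (x ^ (-betaC α)) ^ 2 :=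
    rpow_le_rpow_neg_betaC_sq hx (by linarith [two_mul_betaC_le hα])
  nlinarith [mul_le_mul_of_nonneg_left hinv hc]

end Beta

section Estimates

variable {α : ℝ} {j : ℕ}

lemma le_aseq_mul_mseq_sub (hα : α ∈ Set.Ioo (0 : ℝ) 1) (hj : 2 ≤ j) :
    2 ^ j / 2 * ((1 + (j : ℝ) ^ (-betaC α)) * (1 - 1 / α * (j : ℝ)⁻¹ - (j : ℝ) ^ (1 - 1 / α)))
      ≤ aseq α j * ((mseq α j : ℝ) - mseq α (j - 1)) := by
  obtain ⟨hα0, hα1⟩ := hα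
  have hp : 1 ≤ 1 / α := one_le_one_div hα0 hα1.le
  have hx : (2 : ℝ) ≤ j := by exact_mod_cast hj
  have hgap : 2 * (1 / α * ((j : ℝ) - 1) ^ (1 / α - 1)) - 2
      ≤ (mseq α j : ℝ) - mseq α (j - 1) := by
    have h := abs_mseq_succ_sub_mseq_sub_le α (j - 1)
    rw [Nat.sub_add_cancel (by omega), Nat.cast_sub (by omega), Nat.cast_one,
      sub_add_cancel] at h
    have htan := rpow_add_mul_rpow_sub_one_le (x := (j : ℝ) - 1) (y := 1) (by linarith)
      (by linarith) hp
    rw [sub_add_cancel] at htan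
    linarith [(abs_le.1 h).1]
  have hratio :
      1 - 1 / α * (j : ℝ)⁻¹ ≤ (j : ℝ) ^ (1 - 1 / α) * ((j : ℝ) - 1) ^ (1 / α - 1) := by
    have h := one_sub_mul_le_one_sub_rpow (q := 1 / α - 1) (y := 1 / j) (by linarith)
      (by positivity) (by rw [div_le_one (by linarith)]; linarith)
    rw [rpow_one_sub_mul_rpow_sub_one (by linarith) (by linarith), sub_div,
      div_self (by linarith), one_div (j : ℝ)]
    rwa [sub_add_cancel, one_div (j : ℝ)] at h
  have hA : α * (j : ℝ) ^ (1 - 1 / α) ≤ (j : ℝ) ^ (1 - 1 / α) :=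
    mul_le_of_le_one_left (rpow_nonneg (by linarith) _) hα1.le
  have haseq : 0 ≤ aseq α j := by
    have := rpow_nonneg (Nat.cast_nonneg j) (-betaC α)
    rw [aseq]; positivity
  calc 2 ^ j / 2 * ((1 + (j : ℝ) ^ (-betaC α)) *
          (1 - 1 / α * (j : ℝ)⁻¹ - (j : ℝ) ^ (1 - 1 / α)))
      ≤ 2 ^ j / 2 * ((1 + (j : ℝ) ^ (-betaC α)) *
          ((j : ℝ) ^ (1 - 1 / α) * ((j : ℝ) - 1) ^ (1 / α - 1) -
            α * (j : ℝ) ^ (1 - 1 / α))) := by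
        have := rpow_nonneg (Nat.cast_nonneg j) (-betaC α)
        exact mul_le_mul_of_nonneg_left
          (mul_le_mul_of_nonneg_left (by linarith) (by linarith)) (by positivity)
    _ = aseq α j * (2 * (1 / α * ((j : ℝ) - 1) ^ (1 / α - 1)) - 2) := by
        rw [aseq, zpow_sub₀ two_ne_zero, zpow_natCast]
        field_simp
    _ ≤ aseq α j * ((mseq α j : ℝ) - mseq α (j - 1)) := mul_le_mul_of_nonneg_left hgap haseq

lemma bseq_mul_mseq_sub_le (hα : α ∈ Set.Ioo (0 : ℝ) 1) (hj : 1 / α ≤ j) :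
    bseq α j * ((mseq α (j + 1) : ℝ) - mseq α j)
      ≤ 2 ^ j * ((1 - (j : ℝ) ^ (-betaC α)) *
          (1 + 2 * (1 / α) * (j : ℝ)⁻¹ + (j : ℝ) ^ (1 - 1 / α))) := by
  obtain ⟨hα0, hα1⟩ := hα
  have hp : 1 ≤ 1 / α := one_le_one_div hα0 hα1.le
  have hx : (1 : ℝ) ≤ j := hp.trans hj
  have hgap : (mseq α (j + 1) : ℝ) - mseq α j
      ≤ 2 * (1 / α * ((j : ℝ) + 1) ^ (1 / α - 1)) + 2 := by
    have h := abs_mseq_succ_sub_mseq_sub_le α j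
    have htan := rpow_add_mul_rpow_sub_one_le (x := (j : ℝ) + 1) (y := -1) (by linarith)
      (by linarith) hp
    rw [add_neg_cancel_right] at htan
    linarith [(abs_le.1 h).2]
  have hratio :
      (j : ℝ) ^ (1 - 1 / α) * ((j : ℝ) + 1) ^ (1 / α - 1) ≤ 1 + 2 * (1 / α) * (j : ℝ)⁻¹ := by
    have hqy : (1 / α - 1) * (1 / j) ≤ 1 := by
      rw [mul_one_div, div_le_one (by linarith)]; linarith
    have h := one_add_rpow_le_one_add_two_mul (by linarith) (by positivity) hqy
    rw [rpow_one_sub_mul_rpow_sub_one (by linarith) (by linarith), add_div,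
      div_self (by linarith), one_div (j : ℝ)]
    rw [one_div (j : ℝ)] at h
    have hj0 : (0 : ℝ) ≤ (j : ℝ)⁻¹ := by positivity
    linarith
  have hA : α * (j : ℝ) ^ (1 - 1 / α) ≤ (j : ℝ) ^ (1 - 1 / α) :=
    mul_le_of_le_one_left (rpow_nonneg (by linarith) _) hα1.le
  have hu : (j : ℝ) ^ (-betaC α) ≤ 1 :=
    rpow_le_one_of_one_le_of_nonpos hx (by linarith [betaC_pos ⟨hα0, hα1⟩])
  have hbseq : 0 ≤ bseq α j := by
    have := rpow_nonneg (Nat.cast_nonneg j) (1 - 1 / α)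
    have : 0 ≤ 1 - (j : ℝ) ^ (-betaC α) := by linarith
    rw [bseq]; positivity
  calc bseq α j * ((mseq α (j + 1) : ℝ) - mseq α j)
      ≤ bseq α j * (2 * (1 / α * ((j : ℝ) + 1) ^ (1 / α - 1)) + 2) :=
        mul_le_mul_of_nonneg_left hgap hbseq
    _ = 2 ^ j * ((1 - (j : ℝ) ^ (-betaC α)) *
          ((j : ℝ) ^ (1 - 1 / α) * ((j : ℝ) + 1) ^ (1 / α - 1) + α * (j : ℝ) ^ (1 - 1 / α))) := by
        rw [bseq, zpow_sub₀ two_ne_zero, zpow_natCast]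
        field_simp
    _ ≤ 2 ^ j * ((1 - (j : ℝ) ^ (-betaC α)) *
          (1 + 2 * (1 / α) * (j : ℝ)⁻¹ + (j : ℝ) ^ (1 - 1 / α))) := by
        exact mul_le_mul_of_nonneg_left
          (mul_le_mul_of_nonneg_left (by linarith) (by linarith)) (by positivity)

end Estimates

section LogRatio

variable {α : ℝ} {j : ℕ}

lemma log_phi_pred_div_phi_le (hα : α ∈ Set.Ioo (0 : ℝ) 1) (hj : 2 ≤ j)
    (hsmall : 4 * (1 / α + 1) * (j : ℝ) ^ (-betaC α) ≤ 1) {t : ℝ} (ht : aseq α j ≤ t) :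
    log (phi α (j - 1) t / phi α j t) ≤ -(1 / 4) * 2 ^ j * (j : ℝ) ^ (-betaC α) := by
  have hx : (2 : ℝ) ≤ j := by exact_mod_cast hj
  have hp : 1 ≤ 1 / α := one_le_one_div hα.1 hα.2.le
  have hD : 0 ≤ (mseq α j : ℝ) - mseq α (j - 1) :=
    sub_nonneg.2 (Nat.cast_le.2 (mseq_mono hα.1.le (Nat.sub_le j 1)))
  have htD := mul_le_mul_of_nonneg_right ht hD
  have hA := le_aseq_mul_mseq_sub hα hj
  have herr := mul_inv_add_rpow_le_mul_rpow_neg_betaC_sq hα.1 (by linarith : 0 ≤ 1 / α)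
    (by linarith : (1 : ℝ) ≤ j)
  set u := (j : ℝ) ^ (-betaC α)
  have hu0 : 0 < u := rpow_pos_of_pos (by linarith) _
  have hu1 : u ≤ 1 := by nlinarith
  have hbracket : 1 + u / 2 ≤ (1 + u) * (1 - 1 / α * (j : ℝ)⁻¹ - (j : ℝ) ^ (1 - 1 / α)) :=
    calc 1 + u / 2 ≤ (1 + u) * (1 - (1 / α + 1) * u ^ 2) := by
          nlinarith [mul_le_mul_of_nonneg_right hsmall hu0.le,
            mul_le_mul_of_nonneg_left hu1 (by positivity : 0 ≤ (1 / α + 1) * u ^ 2)]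
      _ ≤ (1 + u) * (1 - 1 / α * (j : ℝ)⁻¹ - (j : ℝ) ^ (1 - 1 / α)) :=
          mul_le_mul_of_nonneg_left (by linarith) (by linarith)
  rw [log_phi_div_phi, pow_sub₀ _ two_ne_zero (by omega), pow_one]
  nlinarith [mul_le_mul_of_nonneg_left hbracket (by positivity : (0 : ℝ) ≤ 2 ^ j / 2)]

lemma log_phi_succ_div_phi_le (hα : α ∈ Set.Ioo (0 : ℝ) 1) (hj : 1 / α ≤ j)
    (hsmall : 4 * (1 / α + 1) * (j : ℝ) ^ (-betaC α) ≤ 1) {t : ℝ} (ht : t ≤ bseq α j) :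
    log (phi α (j + 1) t / phi α j t) ≤ -(1 / 4) * 2 ^ j * (j : ℝ) ^ (-betaC α) := by
  have hp : 1 ≤ 1 / α := one_le_one_div hα.1 hα.2.le
  have hD : 0 ≤ (mseq α (j + 1) : ℝ) - mseq α j :=
    sub_nonneg.2 (Nat.cast_le.2 (mseq_mono hα.1.le (Nat.le_succ j)))
  have htD := mul_le_mul_of_nonneg_right ht hD
  have hB := bseq_mul_mseq_sub_le hα hj
  have h2α : 0 ≤ 2 * (1 / α) := by linarith
  have herr := mul_inv_add_rpow_le_mul_rpow_neg_betaC_sq hα.1 h2α (hp.trans hj)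
  set u := (j : ℝ) ^ (-betaC α)
  have hu0 : 0 < u := rpow_pos_of_pos (by linarith) _
  have hu1 : u ≤ 1 := by nlinarith
  have hbracket :
      (1 - u) * (1 + 2 * (1 / α) * (j : ℝ)⁻¹ + (j : ℝ) ^ (1 - 1 / α)) ≤ 1 - u / 2 :=
    calc (1 - u) * (1 + 2 * (1 / α) * (j : ℝ)⁻¹ + (j : ℝ) ^ (1 - 1 / α))
        ≤ (1 - u) * (1 + (2 * (1 / α) + 1) * u ^ 2) :=
          mul_le_mul_of_nonneg_left (by linarith) (by linarith)
      _ ≤ 1 - u / 2 := by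
          nlinarith [mul_le_mul_of_nonneg_right hsmall hu0.le,
            mul_nonneg (mul_nonneg (by linarith : 0 ≤ 2 * (1 / α) + 1) (sq_nonneg u)) hu0.le,
            sq_nonneg u]
  rw [log_phi_div_phi, pow_succ]
  nlinarith [mul_le_mul_of_nonneg_left hbracket (by positivity : (0 : ℝ) ≤ 2 ^ j),
    mul_pos (by positivity : (0 : ℝ) < 2 ^ j) hu0]

end LogRatio

/-- There are constants `C', c' > 0` depending only on `α` so that for all `j ≥ C'`:
`log (φ_(j-1)(t)/φ_j(t)) ≤ -c' 2^j j^(-β)` for all `t ≥ a_j`, and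
`log (φ_(j+1)(t)/φ_j(t)) ≤ -c' 2^j j^(-β)` for all `t ≤ b_j`. -/
theorem statement8 (α : ℝ) (hα : α ∈ Set.Ioo (0 : ℝ) 1) :
    ∃ C' > (0 : ℝ), ∃ c' > (0 : ℝ), ∀ j : ℕ, C' ≤ (j : ℝ) →
      (∀ t : ℝ, aseq α j ≤ t →
        Real.log (phi α (j - 1) t / phi α j t) ≤ -c' * 2 ^ j * (j : ℝ) ^ (-betaC α)) ∧
      (∀ t : ℝ, t ≤ bseq α j →
        Real.log (phi α (j + 1) t / phi α j t) ≤ -c' * 2 ^ j * (j : ℝ) ^ (-betaC α)) := by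
  obtain ⟨C, hC⟩ := eventually_atTop.1 <|
    ((tendsto_rpow_neg_atTop (betaC_pos hα)).const_mul (4 * (1 / α + 1))).eventually_lt_const
      (by rw [mul_zero]; exact one_pos)
  refine ⟨max (max C 2) (1 / α), lt_max_of_lt_left (lt_max_of_lt_right two_pos), 1 / 4,
    by norm_num, fun j hj => ?_⟩
  rw [max_le_iff, max_le_iff] at hj
  obtain ⟨⟨hCj, h2j⟩, hαj⟩ := hj
  have hsmall := (hC j hCj).le
  exact ⟨fun t ht => log_phi_pred_div_phi_le hα (by exact_mod_cast h2j) hsmall ht,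
    fun t ht => log_phi_succ_div_phi_le hα hαj hsmall ht⟩
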